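/- arXiv:2212.04799 — 2 statements merged into one kernel-verified Lean document; each statement's English description precedes it below -/
import Mathlib

section
/- Let q = p^l with p an odd prime and m an even positive integer. For u, v in F_{q^m}, the number of y in F_{q^m} with Tr_{q^m/q}(y² + uy + v) = 0 equals q^{m-1} + (q-1)·q^{(m-2)/2}·(-1)^{(lm(p-1)+4)/4} if Tr_{q^m/q}(v - u²/4) = 0, and equals q^{m-1} + q^{(m-2)/2}·(-1)^{lm(p-1)/4} otherwise. -/
/-!
Completing the square turns the count into the number of `z` with `Tr(z²) = -Tr(v - u²/4)`.
As `m` is even, `E` contains a field `K` with `[E : K] = 2`, and `Tr_{E/F} = Tr_{K/F} ∘ Tr_{E/K}`.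
In coordinates `z = a + b√d` over `K`, with `d` a nonsquare of `K`, one has
`Tr_{E/K}(z²) = 2 (a² + d b²)`, and the number of representations of `r` by this binary form
is `|K| + χ(-1)` for `r ≠ 0` and `|K| - χ(-1) (|K| - 1)` for `r = 0`, by a Jacobi sum of the
quadratic character `χ` of `K`. Each fibre of `Tr_{K/F}` has `q^{m/2-1}` elements, and
`χ(-1) = (-1)^{(|K|-1)/2} = (-1)^{lm(p-1)/4}`.
-/

open scoped Classical
open Finset

section QuadraticCharSums

variable {F : Type*} [Field F] [Fintype F] [DecidableEq F]

theorem sum_quadraticChar_mul_add_eq_neg_one (hF : ringChar F ≠ 2) {A : F} (hA : A ≠ 0) :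
    ∑ x : F, quadraticChar F x * quadraticChar F (x + A) = -1 := by
  set χ := quadraticChar F
  have hA2 : χ (A ^ 2) = 1 := quadraticChar_sq_one' hA
  -- substitute `x = -A * y` to reach the Jacobi sum `J(χ, χ) = -χ(-1)`
  have hsubst : ∀ y : F, χ (-A * y) * χ (-A * y + A) = χ (-1) * (χ y * χ (1 - y)) := by
    intro y
    rw [← map_mul, ← map_mul, ← map_mul,
      show -A * y * (-A * y + A) = -1 * (y * (1 - y)) * A ^ 2 by ring, map_mul, hA2, mul_one]
  have hJ : jacobiSum χ χ = -χ (-1) := by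
    simpa only [(quadraticChar_isQuadratic F).inv] using
      jacobiSum_nontrivial_inv (quadraticChar_ne_one hF)
  rw [← Equiv.sum_comp (Equiv.mulLeft₀ (-A) (neg_ne_zero.mpr hA))]
  simp only [Equiv.mulLeft₀_apply, hsubst, ← Finset.mul_sum]
  rw [← jacobiSum, hJ, mul_neg, ← sq, quadraticChar_sq_one (neg_ne_zero.mpr one_ne_zero)]

theorem sum_quadraticChar_sq_add (hF : ringChar F ≠ 2) (A : F) :
    ∑ t : F, quadraticChar F (t ^ 2 + A) = (if A = 0 then (Fintype.card F : ℤ) else 0) - 1 := by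
  set χ := quadraticChar F
  have hfib : ∑ t : F, χ (t ^ 2 + A) = ∑ x : F, (χ x + 1) * χ (x + A) := by
    rw [← Finset.sum_fiberwise univ (fun t => t ^ 2)]
    refine Finset.sum_congr rfl fun x _ => ?_
    rw [Finset.sum_congr rfl fun t ht => by rw [(Finset.mem_filter.mp ht).2], Finset.sum_const,
      nsmul_eq_mul, ← quadraticChar_card_sqrts hF, Set.toFinset_ofPred]
  have hshift : ∑ x : F, χ (x + A) = 0 :=
    (Equiv.sum_comp (Equiv.addRight A) (fun x => χ x)).trans (quadraticChar_sum_zero hF)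
  rw [hfib]
  simp only [add_mul, one_mul, Finset.sum_add_distrib, hshift, add_zero]
  split_ifs with hA
  · subst hA
    rw [← Finset.add_sum_erase _ _ (mem_univ 0), Finset.sum_congr rfl fun x hx => by
      rw [add_zero, ← sq, quadraticChar_sq_one (Finset.ne_of_mem_erase hx)], Finset.sum_const,
      Finset.card_erase_of_mem (mem_univ 0), Finset.card_univ, nsmul_one,
      Nat.cast_sub Fintype.card_pos]
    simp [χ]
  · rw [sum_quadraticChar_mul_add_eq_neg_one hF hA, zero_sub]

theorem card_sq_add_mul_sq_eq (hF : ringChar F ≠ 2) {d : F} (hd : ¬IsSquare d) (r : F) :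
    (#{x : F × F | x.1 ^ 2 + d * x.2 ^ 2 = r} : ℤ) = Fintype.card F + quadraticChar F (-1)
      - if r = 0 then quadraticChar F (-1) * Fintype.card F else 0 := by
  set χ := quadraticChar F
  have hd0 : d ≠ 0 := by rintro rfl; exact hd ⟨0, by ring⟩
  have hχd : χ d = -1 := quadraticChar_neg_one_iff_not_isSquare.mpr hd
  have hfib : ∀ b : F, (#{a : F | a ^ 2 + d * b ^ 2 = r} : ℤ)
      = χ (-d) * χ (b ^ 2 + -(r / d)) + 1 := by
    intro b
    rw [← map_mul, show -d * (b ^ 2 + -(r / d)) = r - d * b ^ 2 by field_simp; ring,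
      ← quadraticChar_card_sqrts hF, Set.toFinset_ofPred]
    simp only [eq_sub_iff_add_eq]
  rw [Finset.card_filter, Fintype.sum_prod_type_right]
  simp only [← Finset.card_filter]
  push_cast
  simp only [hfib]
  rw [Finset.sum_add_distrib, ← Finset.mul_sum, sum_quadraticChar_sq_add hF,
    neg_eq_neg_one_mul d, map_mul, hχd]
  simp only [neg_eq_zero, div_eq_zero_iff, hd0, or_false, Finset.sum_const, Finset.card_univ,
    nsmul_eq_mul, mul_one]
  split_ifs <;> ring

end QuadraticCharSums

section QuadraticGalois

variable {K E : Type*} [Field K] [Field E] [Algebra K E] [FiniteDimensional K E] [IsGalois K E]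

theorem IsGalois.exists_ne_one_of_finrank_eq_two (h2 : Module.finrank K E = 2) :
    ∃ σ : Gal(E/K), σ ≠ 1 := by
  have : Nontrivial Gal(E/K) := by
    rw [← Finite.one_lt_card_iff_nontrivial, IsGalois.card_aut_eq_finrank, h2]
    norm_num
  exact exists_ne 1

variable {σ : Gal(E/K)}

theorem IsGalois.eq_one_or_eq_of_finrank_eq_two (h2 : Module.finrank K E = 2) (hσ : σ ≠ 1)
    (τ : Gal(E/K)) : τ = 1 ∨ τ = σ := by
  classical
  have huniv : (univ : Finset Gal(E/K)) = {1, σ} := by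
    refine (Finset.eq_of_subset_of_card_le (subset_univ _) ?_).symm
    rw [Finset.card_univ, ← Nat.card_eq_fintype_card, IsGalois.card_aut_eq_finrank, h2,
      Finset.card_pair hσ.symm]
  have hτ : τ ∈ ({1, σ} : Finset Gal(E/K)) := huniv ▸ mem_univ τ
  simpa using hτ

theorem IsGalois.algebraMap_trace_eq_add (h2 : Module.finrank K E = 2) (hσ : σ ≠ 1) (x : E) :
    algebraMap K E (Algebra.trace K E x) = x + σ x := by
  rw [trace_eq_sum_automorphisms, Fintype.sum_eq_add 1 σ hσ.symm, AlgEquiv.one_apply]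
  intro τ hτ
  exact absurd (IsGalois.eq_one_or_eq_of_finrank_eq_two h2 hσ τ) (not_or.mpr hτ)

theorem IsGalois.mem_range_algebraMap_iff_apply_eq (h2 : Module.finrank K E = 2) (hσ : σ ≠ 1)
    (x : E) : x ∈ Set.range (algebraMap K E) ↔ σ x = x := by
  rw [IsGalois.mem_range_algebraMap_iff_fixed]
  refine ⟨fun h => h σ, fun h τ => ?_⟩
  rcases IsGalois.eq_one_or_eq_of_finrank_eq_two h2 hσ τ with rfl | rfl
  · rfl
  · exact h

theorem IsGalois.apply_apply_of_finrank_eq_two (h2 : Module.finrank K E = 2) (hσ : σ ≠ 1)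
    (x : E) : σ (σ x) = x := by
  rcases IsGalois.eq_one_or_eq_of_finrank_eq_two h2 hσ (σ * σ) with h | h
  · exact AlgEquiv.ext_iff.mp h x
  · exact absurd (mul_eq_left.mp h) hσ

theorem IsGalois.exists_apply_eq_neg (h2 : Module.finrank K E = 2) (hσ : σ ≠ 1) :
    ∃ f : E, f ≠ 0 ∧ σ f = -f := by
  obtain ⟨g, hg⟩ : ∃ g : E, σ g ≠ g := by
    by_contra! h
    exact hσ (AlgEquiv.ext h)
  refine ⟨g - σ g, sub_ne_zero.mpr hg.symm, ?_⟩
  rw [map_sub, IsGalois.apply_apply_of_finrank_eq_two h2 hσ, neg_sub]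

variable (K E) in
-- `ι (a, b) = a + b √d`, where `√d = g - σ g` for any `g` not fixed by `σ`.
theorem IsGalois.exists_injective_trace_sq_eq (hK : ringChar K ≠ 2)
    (h2 : Module.finrank K E = 2) :
    ∃ d : K, ¬IsSquare d ∧ ∃ ι : K × K → E, Function.Injective ι ∧
      ∀ x : K × K, Algebra.trace K E (ι x ^ 2) = 2 * (x.1 ^ 2 + d * x.2 ^ 2) := by
  have h2E : (2 : E) ≠ 0 := Ring.two_ne_zero (by rwa [← Algebra.ringChar_eq K E])
  obtain ⟨σ, hσ⟩ := IsGalois.exists_ne_one_of_finrank_eq_two h2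
  obtain ⟨f, hf0, hσf⟩ := IsGalois.exists_apply_eq_neg h2 hσ
  have hfix := IsGalois.mem_range_algebraMap_iff_apply_eq h2 hσ
  obtain ⟨d, hd⟩ := (hfix (f ^ 2)).mpr (by rw [map_pow, hσf, neg_sq])
  refine ⟨d, ?_, fun x => algebraMap K E x.1 + algebraMap K E x.2 * f, ?_, fun x => ?_⟩
  · rintro ⟨c, rfl⟩
    have hf : f = algebraMap K E c ∨ f = -algebraMap K E c := by
      rw [← sq_eq_sq_iff_eq_or_eq_neg, ← hd, map_mul, sq]
    have hfK : σ f = f := by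
      rcases hf with hf | hf <;> rw [hf] <;> simp only [map_neg, AlgEquiv.commutes]
    have : 2 * f = 0 := by linear_combination hfK.symm.trans hσf
    exact hf0 ((mul_eq_zero.mp this).resolve_left h2E)
  · intro x y hxy
    have hσxy := congrArg σ hxy
    simp only [map_add, map_mul, AlgEquiv.commutes, hσf] at hσxy
    have h1 : algebraMap K E x.1 = algebraMap K E y.1 :=
      mul_left_cancel₀ h2E (by linear_combination hxy + hσxy)
    have h2 : algebraMap K E x.2 = algebraMap K E y.2 :=
      mul_right_cancel₀ hf0 (mul_left_cancel₀ h2E (by linear_combination hxy - hσxy))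
    exact Prod.ext ((algebraMap K E).injective h1) ((algebraMap K E).injective h2)
  · apply (algebraMap K E).injective
    rw [IsGalois.algebraMap_trace_eq_add h2 hσ]
    simp only [map_pow, map_add, map_mul, AlgEquiv.commutes, hσf, map_ofNat, hd]
    ring

end QuadraticGalois

section FiniteQuadraticExtension

variable {K E : Type*} [Field K] [Fintype K] [DecidableEq K] [Field E] [Fintype E] [Algebra K E]

theorem card_trace_sq_fiber_of_finrank_eq_two (hK : ringChar K ≠ 2)
    (h2 : Module.finrank K E = 2) (s : K) :
    (#{z : E | Algebra.trace K E (z ^ 2) = s} : ℤ) = Fintype.card K + quadraticChar K (-1)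
      - if s = 0 then quadraticChar K (-1) * Fintype.card K else 0 := by
  obtain ⟨d, hd, ι, hι, htr⟩ := IsGalois.exists_injective_trace_sq_eq K E hK h2
  have hbij : Function.Bijective ι := (Fintype.bijective_iff_injective_and_card ι).mpr
    ⟨hι, by rw [Fintype.card_prod, Module.card_eq_pow_finrank (K := K) (V := E), h2, sq]⟩
  have h2K : (2 : K) ≠ 0 := Ring.two_ne_zero hK
  rw [← Finset.card_equiv (Equiv.ofBijective ι hbij)
    (s := {x : K × K | x.1 ^ 2 + d * x.2 ^ 2 = s / 2})
    fun x => by simp [htr, eq_div_iff h2K, mul_comm], card_sq_add_mul_sq_eq hK hd]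
  simp only [div_eq_zero_iff, h2K, or_false]

end FiniteQuadraticExtension

theorem AddMonoidHom.card_fiber_mul_card_of_surjective {G H : Type*} [AddGroup G] [Fintype G]
    [AddGroup H] [Fintype H] [DecidableEq H] (f : G →+ H) (hf : Function.Surjective f) (h : H) :
    #{g | f g = h} * Fintype.card H = Fintype.card G := by
  calc #{g | f g = h} * Fintype.card H = ∑ h' : H, #{g | f g = h'} := by
        rw [Finset.sum_congr rfl fun h' _ =>
            AddMonoidHom.card_fiber_eq_of_mem_range f (hf h') (hf h), Finset.sum_const,
          smul_eq_mul, Finset.card_univ, mul_comm]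
    _ = Fintype.card G :=
        (Finset.card_eq_sum_card_fiberwise (f := f) (t := univ) fun _ _ => mem_univ _).symm

theorem card_trace_fiber {F K : Type*} [Field F] [Fintype F] [DecidableEq F] [Field K]
    [Fintype K] [Algebra F K] (b : F) :
    #{s : K | Algebra.trace F K s = b} = Fintype.card F ^ (Module.finrank F K - 1) := by
  have h := (Algebra.trace F K).toAddMonoidHom.card_fiber_mul_card_of_surjective
    (Algebra.trace_surjective F K) b
  rw [Module.card_eq_pow_finrank (K := F) (V := K), ← pow_sub_one_mul Module.finrank_pos.ne'] at h
  exact Nat.eq_of_mul_eq_mul_right Fintype.card_pos h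

theorem card_trace_sq_fiber_of_isScalarTower {F K E : Type*} [Field F] [Fintype F] [DecidableEq F]
    [Field K] [Fintype K] [DecidableEq K] [Field E] [Fintype E] [Algebra F K] [Algebra K E]
    [Algebra F E] [IsScalarTower F K E] (hK : ringChar K ≠ 2) (h2 : Module.finrank K E = 2)
    (b : F) :
    (#{z : E | Algebra.trace F E (z ^ 2) = b} : ℤ)
      = Fintype.card F ^ (Module.finrank F K - 1) * (Fintype.card K + quadraticChar K (-1))
        - if b = 0 then quadraticChar K (-1) * Fintype.card K else 0 := by
  have hmaps : Set.MapsTo (fun z : E => Algebra.trace K E (z ^ 2))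
      ({z : E | Algebra.trace F E (z ^ 2) = b} : Finset E)
      ({s : K | Algebra.trace F K s = b} : Finset K) := by
    intro z hz
    simpa [Algebra.trace_trace] using hz
  have hfiber : ∀ s ∈ ({s : K | Algebra.trace F K s = b} : Finset K),
      #{z ∈ ({z : E | Algebra.trace F E (z ^ 2) = b} : Finset E) | Algebra.trace K E (z ^ 2) = s}
        = #{z : E | Algebra.trace K E (z ^ 2) = s} := by
    intro s hs
    congr 1
    ext z
    simp only [mem_filter, mem_univ, true_and, and_iff_right_iff_imp] at hs ⊢
    intro hz
    rw [← Algebra.trace_trace (S := K), hz, hs]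
  rw [Finset.card_eq_sum_card_fiberwise hmaps, Nat.cast_sum, Finset.sum_congr rfl fun s hs => by
    rw [hfiber s hs, card_trace_sq_fiber_of_finrank_eq_two hK h2 s], Finset.sum_sub_distrib,
    Finset.sum_const, card_trace_fiber, Finset.sum_ite_eq']
  simp [eq_comm]

theorem quadraticChar_neg_one_of_card_eq_pow {K : Type*} [Field K] [Fintype K] [DecidableEq K]
    {p n : ℕ} (hp : Odd p) (hK : Fintype.card K = p ^ n) :
    quadraticChar K (-1) = (-1) ^ (n * (p / 2)) := by
  have hodd : Fintype.card K % 2 = 1 := Nat.odd_iff.mp (hK ▸ hp.pow)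
  rw [quadraticChar_neg_one (by simp [FiniteField.even_card_iff_char_two, hodd]), hK,
    Nat.cast_pow, map_pow, ZMod.χ₄_eq_neg_one_pow (Nat.odd_iff.mp hp), ← pow_mul, mul_comm]

theorem IsGalois.exists_intermediateField_finrank_eq_two {F E : Type*} [Field F] [Field E]
    [Algebra F E] [FiniteDimensional F E] [IsGalois F E] (h : 2 ∣ Module.finrank F E) :
    ∃ K : IntermediateField F E, Module.finrank K E = 2 := by
  have : Fact (Nat.Prime 2) := ⟨Nat.prime_two⟩
  obtain ⟨σ, hσ⟩ := exists_prime_orderOf_dvd_card' (G := Gal(E/F)) 2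
    (IsGalois.card_aut_eq_finrank F E ▸ h)
  exact ⟨IntermediateField.fixedField (Subgroup.zpowers σ), by
    rw [IntermediateField.finrank_fixedField_eq_card, Nat.card_zpowers, hσ]⟩

theorem card_apply_sq_add_mul_add_eq_zero {E F : Type*} [Field E] [Fintype E] [AddCommGroup F]
    [DecidableEq F] (T : E →+ F) (h2 : (2 : E) ≠ 0) (u v : E) :
    #{y : E | T (y ^ 2 + u * y + v) = 0} = #{z : E | T (z ^ 2) = -T (v - u ^ 2 / 4)} := by
  refine Finset.card_equiv (Equiv.addRight (u / 2)) fun y => ?_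
  have hsq : (y + u / 2) ^ 2 = (y ^ 2 + u * y + v) - (v - u ^ 2 / 4) := by
    rw [show (4 : E) = 2 ^ 2 by norm_num, ← div_pow]
    linear_combination y * div_mul_cancel₀ u h2
  simp only [mem_filter, mem_univ, true_and, Equiv.coe_addRight, hsq, map_sub,
    sub_eq_neg_self]

theorem stmt7_general {F E : Type*} [Field F] [Fintype F] [Field E] [Fintype E] [Algebra F E]
    (p l m : ℕ) (hpodd : Odd p)
    (hm : Even m)
    (hF : Fintype.card F = p ^ l) (hE : Fintype.card E = Fintype.card F ^ m)
    (u v : E) :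
    (Algebra.trace F E (v - u ^ 2 / 4) = 0 →
      ((univ.filter (fun y : E =>
        Algebra.trace F E (y ^ 2 + u * y + v) = 0)).card : ℤ)
        = (Fintype.card F : ℤ) ^ (m - 1)
          + ((Fintype.card F : ℤ) - 1) * (Fintype.card F : ℤ) ^ ((m - 2) / 2)
            * (-1) ^ ((l * m * (p - 1) + 4) / 4)) ∧
    (Algebra.trace F E (v - u ^ 2 / 4) ≠ 0 →
      ((univ.filter (fun y : E =>
        Algebra.trace F E (y ^ 2 + u * y + v) = 0)).card : ℤ)
        = (Fintype.card F : ℤ) ^ (m - 1)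
          + (Fintype.card F : ℤ) ^ ((m - 2) / 2)
            * (-1) ^ (l * m * (p - 1) / 4)) := by
  have hcharF : ringChar F ≠ 2 := by
    simp [FiniteField.even_card_iff_char_two, Nat.odd_iff.mp (hF ▸ hpodd.pow)]
  have hrank : Module.finrank F E = m :=
    Nat.pow_right_injective Fintype.one_lt_card (Module.card_eq_pow_finrank.symm.trans hE)
  obtain ⟨K, hK2⟩ := IsGalois.exists_intermediateField_finrank_eq_two (hrank ▸ hm.two_dvd)
  set n := Module.finrank F K
  have hmn : m = 2 * n := by rw [← hrank, ← Module.finrank_mul_finrank F K E, hK2, mul_comm]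
  have hn : 0 < n := Module.finrank_pos
  have hKcard : Fintype.card K = Fintype.card F ^ n := Module.card_eq_pow_finrank
  have hsign : quadraticChar K (-1) = (-1) ^ (l * m * (p - 1) / 4) := by
    rw [quadraticChar_neg_one_of_card_eq_pow hpodd (by rw [hKcard, hF, ← pow_mul])]
    obtain ⟨k, rfl⟩ := hpodd
    rw [hmn, show l * (2 * n) * (2 * k + 1 - 1) = l * n * k * 4 by rw [Nat.add_sub_cancel]; ring,
      Nat.mul_div_cancel _ four_pos, show (2 * k + 1) / 2 = k by omega, mul_assoc]
  have hcount := card_trace_sq_fiber_of_isScalarTower (F := F) (K := K) (E := E)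
    (by rwa [← Algebra.ringChar_eq F K]) hK2 (-Algebra.trace F E (v - u ^ 2 / 4))
  have hshift : #{y : E | Algebra.trace F E (y ^ 2 + u * y + v) = 0}
      = #{z : E | Algebra.trace F E (z ^ 2) = -Algebra.trace F E (v - u ^ 2 / 4)} :=
    card_apply_sq_add_mul_add_eq_zero (Algebra.trace F E).toAddMonoidHom
      (Ring.two_ne_zero (by rwa [← Algebra.ringChar_eq F E])) u v
  rw [hshift, hcount, hKcard, hsign, neg_eq_zero, show m - 1 = n - 1 + n by omega,
    show (m - 2) / 2 = n - 1 by omega, Nat.add_div_right _ four_pos, ← Nat.sub_add_cancel hn]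
  push_cast
  refine ⟨fun hc => ?_, fun hc => ?_⟩ <;> simp only [hc, if_true, if_false] <;> ring

/-- `q = p^l`, `p` odd prime, `m` even positive.  The number of
`y ∈ F_{q^m}` with `Tr_{q^m/q}(y² + uy + v) = 0` is given by the two stated cases. -/
theorem stmt7 {F E : Type*} [Field F] [Fintype F] [Field E] [Fintype E] [Algebra F E]
    (p l m : ℕ) (hp : p.Prime) (hpodd : Odd p) (hl : 0 < l)
    (hm : Even m) (hm0 : 0 < m)
    (hF : Fintype.card F = p ^ l) (hE : Fintype.card E = Fintype.card F ^ m)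
    (u v : E) :
    (Algebra.trace F E (v - u ^ 2 / 4) = 0 →
      ((univ.filter (fun y : E =>
        Algebra.trace F E (y ^ 2 + u * y + v) = 0)).card : ℤ)
        = (Fintype.card F : ℤ) ^ (m - 1)
          + ((Fintype.card F : ℤ) - 1) * (Fintype.card F : ℤ) ^ ((m - 2) / 2)
            * (-1) ^ ((l * m * (p - 1) + 4) / 4)) ∧
    (Algebra.trace F E (v - u ^ 2 / 4) ≠ 0 →
      ((univ.filter (fun y : E =>
        Algebra.trace F E (y ^ 2 + u * y + v) = 0)).card : ℤ)
        = (Fintype.card F : ℤ) ^ (m - 1)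
          + (Fintype.card F : ℤ) ^ ((m - 2) / 2)
            * (-1) ^ (l * m * (p - 1) / 4)) :=
  stmt7_general p l m hpodd hm hF hE u v
end

section
/- Let m ≥ 2 be an integer. The binary code of length 2^{2m-1} whose codewords are (a + Tr(bx + cy))_{(x,y) ∈ D} for a ∈ F_2, b, c ∈ F_{2^m}, where D = {(x,y) ∈ F_{2^m}² : Tr(x) + Tr(y²) = 0} and Tr = Tr_{2^m/2}, has parameters [2^{2m-1}, 2m, 2^{2m-2}] and weight enumerator 1 + (2^{2m} - 2)·z^{2^{2m-2}} + z^{2^{2m-1}}; it meets the Griesmer bound with equality. -/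
open scoped Classical
open Finset

/-- The defining predicate `Tr(x) + Tr(y²) = 0` on `F_{2^m}²`, `Tr = Tr_{2^m/2}`. -/
def D14pred {K : Type*} [Field K] [Fintype K] [Algebra (ZMod 2) K] (p : K × K) : Prop :=
  Algebra.trace (ZMod 2) K p.1 + Algebra.trace (ZMod 2) K (p.2 ^ 2) = 0

/-- The codeword `(a + Tr(bx + cy))_{(x,y) ∈ D}` for `u = (a,b,c)`. -/
noncomputable def cw14 {K : Type*} [Field K] [Fintype K] [Algebra (ZMod 2) K]
    (u : ZMod 2 × K × K) : {p : K × K // D14pred p} → ZMod 2 :=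
  fun p => u.1 + Algebra.trace (ZMod 2) K (u.2.1 * p.1.1 + u.2.2 * p.1.2)

/-- The Hamming weight of a codeword. -/
noncomputable def wt14 {K : Type*} [Field K] [Fintype K] [Algebra (ZMod 2) K]
    (f : {p : K × K // D14pred p} → ZMod 2) : ℕ :=
  (univ.filter (fun p => f p ≠ 0)).card

/-!
Since `Tr (y ^ 2) = Tr y`, the set `D` is the kernel of the nonzero linear form
`ψ = L₁₁`, where `L_bc (x, y) = Tr (b x + c y)`; hence `|D| = 2 ^ (2m - 1)`. The codeword of
`(a, b, c)` is the affine form `a + L_bc` restricted to `D`. By nondegeneracy of the trace form,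
`L_bc` vanishes on `ker ψ` only if it is a multiple of `ψ`, i.e. `(b, c) ∈ {(0, 0), (1, 1)}`.
So the encoding has kernel `{0, (0, 1, 1)}`, giving `2 ^ (2m)` codewords; the only codewords
constant on `D` are `0` and the all-one word; and every other codeword is a nonconstant affine
form on the `𝔽₂`-space `ker ψ`, hence takes the value `1` on exactly half of it.
-/

theorem ZMod.eq_zero_or_eq_one (a : ZMod 2) : a = 0 ∨ a = 1 := by
  fin_cases a
  exacts [Or.inl rfl, Or.inr rfl]

theorem ZMod.add_ne_zero_iff_eq_one_add (a b : ZMod 2) : a + b ≠ 0 ↔ b = 1 + a := by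
  rcases a.eq_zero_or_eq_one with rfl | rfl <;> rcases b.eq_zero_or_eq_one with rfl | rfl <;>
    decide

section FiberCount

variable {G M : Type*} [AddGroup G] [Fintype G] [AddMonoid M] [DecidableEq M]

theorem AddMonoidHom.card_eq_card_image_mul_card_fiber_zero (f : G →+ M) :
    Fintype.card G = #(univ.image f) * #{g | f g = 0} := by
  rw [← card_univ, card_eq_sum_card_image f univ, ← smul_eq_mul, ← sum_const]
  refine sum_congr rfl fun y hy => ?_
  obtain ⟨x, -, rfl⟩ := mem_image.1 hy
  exact AddMonoidHom.card_fiber_eq_of_mem_range f ⟨x, rfl⟩ ⟨0, map_zero f⟩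

theorem AddMonoidHom.card_fiber_mul_two (f : G →+ ZMod 2) (hf : f ≠ 0) (t : ZMod 2) :
    #{g | f g = t} * 2 = Fintype.card G := by
  obtain ⟨x, hx⟩ : ∃ x, f x ≠ 0 := by
    by_contra! h
    exact hf (AddMonoidHom.ext h)
  have hsurj : Function.Surjective f := by
    intro t
    rcases t.eq_zero_or_eq_one with rfl | rfl
    · exact ⟨0, map_zero f⟩
    · exact ⟨x, (f x).eq_zero_or_eq_one.resolve_left hx⟩
  rw [f.card_eq_card_image_mul_card_fiber_zero, image_univ_of_surjective hsurj,
    AddMonoidHom.card_fiber_eq_of_mem_range f (hsurj t) ⟨0, map_zero f⟩, card_univ,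
    ZMod.card, mul_comm]

end FiberCount

theorem LinearMap.exists_eq_smul_of_ker_le {𝕜 E : Type*} [Field 𝕜] [AddCommGroup E]
    [Module 𝕜 E] {φ g : E →ₗ[𝕜] 𝕜} (h : ker φ ≤ ker g) : ∃ c : 𝕜, g = c • φ := by
  have hspan :=
    mem_span_of_iInf_ker_le_ker (L := fun _ : Unit => φ) (K := g) (by simpa using h)
  obtain ⟨c, hc⟩ := Submodule.mem_span_singleton.1 (by simpa using hspan)
  exact ⟨c, hc.symm⟩

theorem Algebra.trace_pow_card {F L : Type*} [Field F] [Fintype F] [Field L] [Algebra F L]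
    [Algebra.IsAlgebraic F L] (x : L) :
    Algebra.trace F L (x ^ Fintype.card F) = Algebra.trace F L x :=
  Algebra.trace_eq_of_algEquiv (FiniteField.frobeniusAlgEquivOfAlgebraic F L) x

section PairTrace

variable (F K : Type*) [Field F] [Field K] [Algebra F K]

noncomputable def pairTrace : K × K →ₗ[F] Module.Dual F (K × K) :=
  (Algebra.traceForm F K).compl₁₂ (LinearMap.fst F K K) (LinearMap.fst F K K) +
    (Algebra.traceForm F K).compl₁₂ (LinearMap.snd F K K) (LinearMap.snd F K K)

variable {F K}

@[simp] theorem pairTrace_apply (w p : K × K) :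
    pairTrace F K w p = Algebra.trace F K (w.1 * p.1) + Algebra.trace F K (w.2 * p.2) := rfl

theorem pairTrace_injective [FiniteDimensional F K] [Algebra.IsSeparable F K] :
    Function.Injective (pairTrace F K) := by
  refine (injective_iff_map_eq_zero _).2 fun w hw => ?_
  have hvanish (p : K × K) : pairTrace F K w p = 0 := by rw [hw, LinearMap.zero_apply]
  have hnd := (traceForm_nondegenerate F K).1
  refine Prod.ext (hnd _ fun x => ?_) (hnd _ fun y => ?_)
  · simpa using hvanish (x, 0)
  · simpa using hvanish (0, y)

theorem exists_eq_smul_one_of_ker_pairTrace_le [FiniteDimensional F K] [Algebra.IsSeparable F K]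
    {w : K × K} (h : LinearMap.ker (pairTrace F K 1) ≤ LinearMap.ker (pairTrace F K w)) :
    ∃ c : F, w = c • 1 := by
  obtain ⟨c, hc⟩ := LinearMap.exists_eq_smul_of_ker_le h
  exact ⟨c, pairTrace_injective (by rw [hc, map_smul])⟩

end PairTrace

section Code

variable {K : Type*} [Field K] [Fintype K] [Algebra (ZMod 2) K]

local notation "ψ" => pairTrace (ZMod 2) K 1

theorem D14pred_iff (p : K × K) : D14pred p ↔ ψ p = 0 := by
  have h := Algebra.trace_pow_card (F := ZMod 2) p.2
  rw [ZMod.card] at h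
  simp [D14pred, h]

theorem cw14_apply (u : ZMod 2 × K × K) (q : {p : K × K // D14pred p}) :
    cw14 u q = u.1 + pairTrace (ZMod 2) K u.2 q.1 := by
  simp [cw14, map_add]

theorem eq_zero_or_eq_one_of_ker_pairTrace_le {w : K × K}
    (h : LinearMap.ker ψ ≤ LinearMap.ker (pairTrace (ZMod 2) K w)) : w = 0 ∨ w = 1 := by
  obtain ⟨c, rfl⟩ := exists_eq_smul_one_of_ker_pairTrace_le h
  rcases c.eq_zero_or_eq_one with rfl | rfl <;> simp

noncomputable def D14EquivKer : {p : K × K // D14pred p} ≃ LinearMap.ker ψ :=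
  Equiv.subtypeEquivRight fun p => (D14pred_iff p).trans LinearMap.mem_ker.symm

theorem card_ker_pairTrace_one_mul_two :
    Fintype.card (LinearMap.ker ψ) * 2 = Fintype.card K ^ 2 := by
  have hψ : (ψ).toAddMonoidHom ≠ 0 := fun h => one_ne_zero <|
    pairTrace_injective (F := ZMod 2) (K := K) (LinearMap.ext fun p => by
      simpa using DFunLike.congr_fun h p)
  rw [sq, ← Fintype.card_prod, ← AddMonoidHom.card_fiber_mul_two _ hψ 0, Fintype.card_subtype]
  simp only [LinearMap.mem_ker]
  rfl

local notation "D" => {p : K × K // D14pred p}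

theorem card_D14_mul_two : Fintype.card D * 2 = Fintype.card K ^ 2 := by
  rw [Fintype.card_congr D14EquivKer, card_ker_pairTrace_one_mul_two]

theorem cw14_eq_const_of_eq_zero_or_eq_one {a : ZMod 2} {w : K × K} (hw : w = 0 ∨ w = 1) :
    cw14 (a, w) = fun _ => a := by
  rcases hw with rfl | rfl <;> funext q
  · simp [cw14_apply]
  · simp [cw14_apply, (D14pred_iff _).1 q.2]

theorem cw14_eq_zero_iff (u : ZMod 2 × K × K) : cw14 u = 0 ↔ u = 0 ∨ u = (0, 1) := by
  obtain ⟨a, w⟩ := u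
  constructor
  · intro h
    have hval (q : D) : a + pairTrace (ZMod 2) K w q.1 = 0 := by
      simpa [cw14_apply] using congr_fun h q
    have ha : a = 0 := by simpa using hval ⟨0, (D14pred_iff 0).2 (map_zero _)⟩
    subst ha
    have hker : LinearMap.ker ψ ≤ LinearMap.ker (pairTrace (ZMod 2) K w) := fun p hp => by
      simpa using hval ⟨p, (D14pred_iff p).2 hp⟩
    rcases eq_zero_or_eq_one_of_ker_pairTrace_le hker with rfl | rfl <;> simp
  · rintro (h | h) <;> obtain ⟨rfl, rfl⟩ := Prod.ext_iff.1 h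
    exacts [cw14_eq_const_of_eq_zero_or_eq_one (Or.inl rfl),
      cw14_eq_const_of_eq_zero_or_eq_one (Or.inr rfl)]

noncomputable def cw14Hom : ZMod 2 × K × K →+ (D → ZMod 2) where
  toFun := cw14
  map_zero' := (cw14_eq_zero_iff 0).2 (Or.inl rfl)
  map_add' u v := funext fun q => by
    simp only [cw14_apply, Prod.fst_add, Prod.snd_add, map_add, LinearMap.add_apply, Pi.add_apply]
    ring

theorem cw14Hom_apply (u : ZMod 2 × K × K) : cw14Hom u = cw14 u := rfl

theorem card_image_cw14 : #(univ.image (cw14 (K := K))) = Fintype.card K ^ 2 := by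
  have hker : ({u | cw14Hom u = 0} : Finset (ZMod 2 × K × K)) = {0, (0, 1)} := by
    ext u
    simp [cw14Hom_apply, cw14_eq_zero_iff]
  have hcard := (cw14Hom (K := K)).card_eq_card_image_mul_card_fiber_zero
  rw [hker, show ⇑cw14Hom = cw14 from rfl, card_pair (by simp [Prod.ext_iff]),
    Fintype.card_prod, Fintype.card_prod, ZMod.card] at hcard
  linarith

theorem wt14_cw14_mul_four {u : ZMod 2 × K × K} (h0 : cw14 u ≠ 0) (h1 : cw14 u ≠ 1) :
    wt14 (cw14 u) * 4 = Fintype.card K ^ 2 := by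
  obtain ⟨a, w⟩ := u
  set g := (pairTrace (ZMod 2) K w).domRestrict (LinearMap.ker ψ)
  have hg : g.toAddMonoidHom ≠ 0 := by
    intro hg
    have hker : LinearMap.ker ψ ≤ LinearMap.ker (pairTrace (ZMod 2) K w) := fun p hp =>
      by simpa [g] using DFunLike.congr_fun hg ⟨p, hp⟩
    have hconst :=
      cw14_eq_const_of_eq_zero_or_eq_one (a := a) (eq_zero_or_eq_one_of_ker_pairTrace_le hker)
    rcases a.eq_zero_or_eq_one with rfl | rfl
    · exact h0 hconst
    · exact h1 hconst
  have hwt : wt14 (cw14 (a, w)) = #{q | g q = 1 + a} :=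
    card_equiv D14EquivKer fun q => by
      simp only [mem_filter, mem_univ, true_and, cw14_apply, ZMod.add_ne_zero_iff_eq_one_add]
      rfl
  rw [hwt, ← card_ker_pairTrace_one_mul_two, ← AddMonoidHom.card_fiber_mul_two _ hg (1 + a),
    mul_assoc]
  rfl

theorem wt14_one_mul_two : wt14 (1 : D → ZMod 2) * 2 = Fintype.card K ^ 2 := by
  simp [wt14, card_D14_mul_two]

theorem wt14_zero : wt14 (0 : D → ZMod 2) = 0 := by
  simp [wt14]

theorem zero_mem_image_cw14 : (0 : D → ZMod 2) ∈ univ.image cw14 :=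
  mem_image.2 ⟨0, mem_univ _, map_zero cw14Hom⟩

theorem one_mem_image_cw14 : (1 : D → ZMod 2) ∈ univ.image cw14 :=
  mem_image.2 ⟨(1, 0), mem_univ _, funext fun q => by simp [cw14_apply]⟩

theorem wt14_of_mem_image_cw14 {f : D → ZMod 2} (hf : f ∈ univ.image cw14) (h0 : f ≠ 0)
    (h1 : f ≠ 1) : wt14 f * 4 = Fintype.card K ^ 2 := by
  obtain ⟨u, -, rfl⟩ := mem_image.1 hf
  exact wt14_cw14_mul_four h0 h1

theorem filter_wt14_mul_two_eq :
    (univ.image cw14).filter (fun f : D → ZMod 2 => wt14 f * 2 = Fintype.card K ^ 2) = {1} := by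
  have hq : 0 < Fintype.card K ^ 2 := by positivity
  ext f
  simp only [mem_filter, mem_singleton]
  refine ⟨fun ⟨hf, hw⟩ => ?_, fun hf => hf ▸ ⟨one_mem_image_cw14, wt14_one_mul_two⟩⟩
  by_contra hf1
  by_cases hf0 : f = 0
  · rw [hf0, wt14_zero] at hw; omega
  · have := wt14_of_mem_image_cw14 hf hf0 hf1; omega

theorem card_filter_wt14_mul_four_eq :
    #((univ.image cw14).filter (fun f : D → ZMod 2 => wt14 f * 4 = Fintype.card K ^ 2)) =
      Fintype.card K ^ 2 - 2 := by
  have hq : 0 < Fintype.card K ^ 2 := by positivity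
  have h1 := wt14_one_mul_two (K := K)
  have hfilter :
      (univ.image cw14).filter (fun f : D → ZMod 2 => wt14 f * 4 = Fintype.card K ^ 2) =
        ((univ.image cw14).erase 0).erase 1 := by
    ext f
    simp only [mem_filter, mem_erase]
    refine ⟨fun ⟨hf, hw⟩ => ⟨?_, ?_, hf⟩,
      fun ⟨hf1, hf0, hf⟩ => ⟨hf, wt14_of_mem_image_cw14 hf hf0 hf1⟩⟩
    · rintro rfl; omega
    · rintro rfl; rw [wt14_zero] at hw; omega
  have h10 : (1 : D → ZMod 2) ≠ 0 := fun h => by rw [h, wt14_zero] at h1; omega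
  rw [hfilter, card_erase_of_mem (mem_erase.2 ⟨h10, one_mem_image_cw14⟩),
    card_erase_of_mem zero_mem_image_cw14, card_image_cw14]
  omega

end Code

theorem sum_range_ceil_two_pow_div_two_pow (k : ℕ) :
    ∑ i ∈ range (k + 2), ⌈(2 : ℚ) ^ k / 2 ^ i⌉ = 2 ^ (k + 1) := by
  induction k with
  | zero => norm_num [sum_range_succ]
  | succ k ih =>
    rw [sum_range_succ', pow_zero, div_one]
    have hshift (i : ℕ) : (2 : ℚ) ^ (k + 1) / 2 ^ (i + 1) = 2 ^ k / 2 ^ i := by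
      rw [pow_succ, pow_succ, mul_div_mul_right _ _ two_ne_zero]
    have hceil : ⌈(2 : ℚ) ^ (k + 1)⌉ = 2 ^ (k + 1) := by exact_mod_cast Int.ceil_natCast _
    simp only [hshift]
    rw [hceil, ih]
    ring

theorem stmt14_general {K : Type*} [Field K] [Fintype K] [Algebra (ZMod 2) K]
    (m : ℕ) (hK : Fintype.card K = 2 ^ m) :
    Fintype.card {p : K × K // D14pred p} = 2 ^ (2 * m - 1) ∧
    (Finset.image (cw14 (K := K)) univ).card = 2 ^ (2 * m) ∧
    (∀ f ∈ Finset.image (cw14 (K := K)) univ, f ≠ 0 →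
      wt14 f = 2 ^ (2 * m - 2) ∨ wt14 f = 2 ^ (2 * m - 1)) ∧
    ((Finset.image (cw14 (K := K)) univ).filter
        (fun f => wt14 f = 2 ^ (2 * m - 2))).card = 2 ^ (2 * m) - 2 ∧
    ((Finset.image (cw14 (K := K)) univ).filter
        (fun f => wt14 f = 2 ^ (2 * m - 1))).card = 1 ∧
    ((2 : ℤ) ^ (2 * m - 1)
      = ∑ i ∈ Finset.range (2 * m), ⌈((2 : ℚ) ^ (2 * m - 2) / 2 ^ i)⌉) := by
  obtain ⟨k, hk⟩ : ∃ k, 2 * m = k + 2 := ⟨2 * m - 2, by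
    have : 1 < 2 ^ m := hK ▸ Fintype.one_lt_card
    have : m ≠ 0 := by rintro rfl; simp at this
    omega⟩
  have hq : Fintype.card K ^ 2 = 2 ^ k * 4 := by
    rw [hK, ← pow_mul, mul_comm, hk, pow_add]; norm_num
  rw [show 2 * m - 1 = k + 1 by omega, show 2 * m - 2 = k by omega, hk, pow_succ]
  have hcard : #(univ.image (cw14 (K := K))) = 2 ^ (k + 2) := by
    rw [card_image_cw14, hq]; ring
  have hD := card_D14_mul_two (K := K)
  have hwt1 := wt14_one_mul_two (K := K)
  refine ⟨by omega, hcard, fun f hf hf0 => ?_, ?_, ?_, (sum_range_ceil_two_pow_div_two_pow k).symm⟩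
  · by_cases hf1 : f = 1
    · subst hf1; omega
    · have := wt14_of_mem_image_cw14 hf hf0 hf1; omega
  · calc _ = #((univ.image cw14).filter fun f => wt14 f * 4 = Fintype.card K ^ 2) :=
          congrArg card (filter_congr fun f _ => by omega)
      _ = 2 ^ (k + 2) - 2 := by rw [card_filter_wt14_mul_four_eq, ← hcard, card_image_cw14]
  · calc _ = #((univ.image cw14).filter fun f => wt14 f * 2 = Fintype.card K ^ 2) :=
          congrArg card (filter_congr fun f _ => by omega)
      _ = 1 := by rw [filter_wt14_mul_two_eq, card_singleton]

/-- the binary code `C̄_{f₂,g₂}^{(2)}` has parameters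
`[2^{2m-1}, 2m, 2^{2m-2}]`, weight enumerator
`1 + (2^{2m}-2) z^{2^{2m-2}} + z^{2^{2m-1}}`, and meets the Griesmer bound
with equality. -/
theorem stmt14 {K : Type*} [Field K] [Fintype K] [Algebra (ZMod 2) K]
    (m : ℕ) (hm : 2 ≤ m) (hK : Fintype.card K = 2 ^ m) :
    Fintype.card {p : K × K // D14pred p} = 2 ^ (2 * m - 1) ∧
    (Finset.image (cw14 (K := K)) univ).card = 2 ^ (2 * m) ∧
    (∀ f ∈ Finset.image (cw14 (K := K)) univ, f ≠ 0 →
      wt14 f = 2 ^ (2 * m - 2) ∨ wt14 f = 2 ^ (2 * m - 1)) ∧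
    ((Finset.image (cw14 (K := K)) univ).filter
        (fun f => wt14 f = 2 ^ (2 * m - 2))).card = 2 ^ (2 * m) - 2 ∧
    ((Finset.image (cw14 (K := K)) univ).filter
        (fun f => wt14 f = 2 ^ (2 * m - 1))).card = 1 ∧
    ((2 : ℤ) ^ (2 * m - 1)
      = ∑ i ∈ Finset.range (2 * m), ⌈((2 : ℚ) ^ (2 * m - 2) / 2 ^ i)⌉) :=
  stmt14_general m hK
end
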